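/- Let q be a natural number and d a divisor of q. Let e₀ be a divisor of d, and write d/e₀ = d₁·d₂²·…·d_k^k where d₁, …, d_{k-1} are pairwise coprime and squarefree. Then κ(q/d) ≤ k^{4ω(q)}·κ(q)·e₀·d₁·…·d_k, where ω(q) is the number of distinct primes dividing q. -/

import Mathlib

open Finset

/-! Write `κ (p ^ n) = c · p ^ (-ε n)` with `c ∈ {1, k}` and `ε n = ⌈n / k⌉ - ½·[n ≡ 1 mod k]`.
The exponent `ε` is monotone and grows by exactly `t` over `k t` steps, so
`κ (p ^ n) ≤ k p ^ t κ (p ^ m)` whenever `m ≤ n + k t`. At a prime `p ∣ q` take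
`n = v_p(q/d)`, `m = v_p(q)` and `t = v_p(e₀ ∏ Dᵢ)`: since `d ∣ (e₀ ∏ Dᵢ) ^ k`, indeed
`v_p(d) ≤ k t`. Multiplying over the `ω(q)` primes of `q` costs the factor `k ^ ω(q)`. -/

theorem Nat.eq_prod_primeFactors_of_dvd {β : Type*} [CommMonoid β] (f : ℕ → β)
    (h_mult : ∀ x y : ℕ, Nat.Coprime x y → f (x * y) = f x * f y) (hf : f 1 = 1)
    {n q : ℕ} (hq : q ≠ 0) (hn : n ∣ q) :
    f n = ∏ p ∈ q.primeFactors, f (p ^ n.factorization p) := by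
  rw [Nat.multiplicative_factorization f h_mult hf (ne_zero_of_dvd_ne_zero hq hn)]
  exact Finsupp.prod_of_support_subset _ (by simpa using Nat.primeFactors_mono hn hq) _
    fun p _ => by rw [pow_zero, hf]

structure IsKappa (k : ℕ) (κ : ℕ → ℝ) : Prop where
  map_one : κ 1 = 1
  map_mul : ∀ m n : ℕ, Nat.Coprime m n → κ (m * n) = κ m * κ n
  apply_pow_mul_add_one : ∀ p : ℕ, p.Prime → ∀ u : ℕ,
    κ (p ^ (u * k + 1)) = (k : ℝ) * (p : ℝ) ^ (-(u : ℝ) - 1/2)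
  apply_pow_mul_add : ∀ p : ℕ, p.Prime → ∀ u v : ℕ, 2 ≤ v → v ≤ k →
    κ (p ^ (u * k + v)) = (p : ℝ) ^ (-(u : ℝ) - 1)

/-- `ε n = ⌈n / k⌉ - ½·[n ≡ 1 mod k]`, with `⌈n / k⌉ = (n + k - 1) / k` and, for `k ≥ 2`,
`n ≡ 1 [MOD k] ↔ (n + k - 1) % k = 0`. -/
noncomputable def kappaExp (k n : ℕ) : ℝ :=
  ((n + k - 1) / k : ℕ) - if (n + k - 1) % k = 0 then 1 / 2 else 0

theorem kappaExp_le_add {k m n t : ℕ} (hk : 0 < k) (h : m ≤ n + k * t) :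
    kappaExp k m ≤ kappaExp k n + t := by
  unfold kappaExp
  set N := n + k - 1
  set M := m + k - 1
  have hMN : M ≤ N + k * t := by omega
  have hdiv : M / k ≤ N / k + t :=
    (Nat.div_le_div_right hMN).trans_eq (Nat.add_mul_div_left _ _ hk)
  rcases hdiv.lt_or_eq with hlt | heq
  · have : ((M / k : ℕ) : ℝ) + 1 ≤ (N / k : ℕ) + t := by exact_mod_cast hlt
    split_ifs <;> linarith
  · have hmod : M % k ≤ N % k := by
      have hM := Nat.div_add_mod M k
      have hN := Nat.div_add_mod N k
      rw [heq, mul_add] at hM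
      omega
    have : ((M / k : ℕ) : ℝ) = (N / k : ℕ) + t := by exact_mod_cast heq
    split_ifs <;> first | omega | linarith

section

variable {k : ℕ} {κ : ℕ → ℝ}

theorem IsKappa.apply_prime_pow (hk : 2 ≤ k) (hκ : IsKappa k κ) {p : ℕ} (hp : p.Prime) (n : ℕ) :
    κ (p ^ n) = (if (n + k - 1) % k = 0 then (k : ℝ) else 1) * (p : ℝ) ^ (-kappaExp k n) := by
  rcases Nat.eq_zero_or_pos n with rfl | hn
  · simp [kappaExp, hκ.map_one, Nat.div_eq_of_lt (by omega : k - 1 < k),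
      Nat.mod_eq_of_lt (by omega : k - 1 < k), show k - 1 ≠ 0 by omega]
  obtain ⟨u, r, hr, rfl⟩ : ∃ u r, r < k ∧ n = u * k + (r + 1) :=
    ⟨(n - 1) / k, (n - 1) % k, Nat.mod_lt _ (by omega),
      by have := Nat.div_add_mod' (n - 1) k; omega⟩
  have hN : u * k + (r + 1) + k - 1 = r + k * (u + 1) := by ring_nf; omega
  rw [kappaExp, hN, Nat.add_mul_div_left _ _ (by omega), Nat.add_mul_mod_self_left,
    Nat.div_eq_of_lt hr, Nat.mod_eq_of_lt hr]
  rcases Nat.eq_zero_or_pos r with rfl | hr0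
  · rw [hκ.apply_pow_mul_add_one p hp]
    push_cast
    ring_nf
  · rw [hκ.apply_pow_mul_add p hp u (r + 1) (by omega) (by omega)]
    simp only [hr0.ne', if_false]
    push_cast
    ring_nf

theorem IsKappa.apply_prime_pow_le (hk : 2 ≤ k) (hκ : IsKappa k κ) {p : ℕ} (hp : p.Prime)
    {m n t : ℕ} (h : m ≤ n + k * t) : κ (p ^ n) ≤ k * p ^ t * κ (p ^ m) := by
  have hp1 : (1 : ℝ) ≤ p := by exact_mod_cast hp.one_lt.le
  have hk1 : (1 : ℝ) ≤ k := by exact_mod_cast (by omega : 1 ≤ k)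
  have hexp := kappaExp_le_add (by omega) h
  rw [hκ.apply_prime_pow hk hp, hκ.apply_prime_pow hk hp]
  calc (if (n + k - 1) % k = 0 then (k : ℝ) else 1) * (p : ℝ) ^ (-kappaExp k n)
      ≤ k * (p : ℝ) ^ (-kappaExp k n) := by
        gcongr
        split_ifs <;> linarith
    _ ≤ k * (p : ℝ) ^ ((t : ℝ) + -kappaExp k m) := by
        gcongr
        linarith
    _ ≤ k * p ^ t *
          ((if (m + k - 1) % k = 0 then (k : ℝ) else 1) * (p : ℝ) ^ (-kappaExp k m)) := by
        rw [Real.rpow_add (by linarith), Real.rpow_natCast, mul_assoc]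
        gcongr
        exact le_mul_of_one_le_left (by positivity) (by split_ifs <;> linarith)

theorem IsKappa.nonneg (hk : 2 ≤ k) (hκ : IsKappa k κ) {n : ℕ} (hn : n ≠ 0) : 0 ≤ κ n := by
  rw [Nat.eq_prod_primeFactors_of_dvd κ hκ.map_mul hκ.map_one hn dvd_rfl]
  refine prod_nonneg fun p hp => ?_
  rw [hκ.apply_prime_pow hk (Nat.prime_of_mem_primeFactors hp)]
  positivity

theorem IsKappa.apply_div_le (hk : 2 ≤ k) (hκ : IsKappa k κ) {q d m : ℕ} (hq : q ≠ 0)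
    (hd : d ∣ q) (hm : m ∣ q) (hdm : d ∣ m ^ k) :
    κ (q / d) ≤ k ^ q.primeFactors.card * κ q * m := by
  have hlocal : ∀ p ∈ q.primeFactors, κ (p ^ (q / d).factorization p) ≤
      k * p ^ m.factorization p * κ (p ^ q.factorization p) := by
    intro p hp
    refine hκ.apply_prime_pow_le hk (Nat.prime_of_mem_primeFactors hp) ?_
    have hle := (Nat.factorization_le_iff_dvd (ne_zero_of_dvd_ne_zero hq hd)
      (pow_ne_zero k (ne_zero_of_dvd_ne_zero hq hm))).2 hdm p
    rw [Nat.factorization_pow, Finsupp.smul_apply, smul_eq_mul] at hle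
    rw [Nat.factorization_div hd, Finsupp.coe_tsub, Pi.sub_apply]
    omega
  rw [Nat.eq_prod_primeFactors_of_dvd κ hκ.map_mul hκ.map_one hq (Nat.div_dvd_of_dvd hd),
    Nat.eq_prod_primeFactors_of_dvd κ hκ.map_mul hκ.map_one hq dvd_rfl,
    Nat.eq_prod_primeFactors_of_dvd (Nat.cast : ℕ → ℝ)
      (fun x y _ => Nat.cast_mul x y) Nat.cast_one hq hm]
  calc ∏ p ∈ q.primeFactors, κ (p ^ (q / d).factorization p)
      ≤ ∏ p ∈ q.primeFactors, (k * p ^ m.factorization p * κ (p ^ q.factorization p)) :=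
        prod_le_prod (fun p hp => hκ.nonneg hk
          (pow_ne_zero _ (Nat.prime_of_mem_primeFactors hp).ne_zero)) hlocal
    _ = _ := by
        simp only [prod_mul_distrib, prod_const, Nat.cast_pow]
        ring

end

theorem stmt2 (k : ℕ) (hk : 2 ≤ k) (κ : ℕ → ℝ)
    (hκ1 : κ 1 = 1)
    (hκmul : ∀ m n : ℕ, Nat.Coprime m n → κ (m * n) = κ m * κ n)
    (hκA : ∀ p : ℕ, p.Prime → ∀ u : ℕ,
      κ (p ^ (u * k + 1)) = (k : ℝ) * (p : ℝ) ^ (-(u : ℝ) - 1/2))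
    (hκB : ∀ p : ℕ, p.Prime → ∀ u v : ℕ, 2 ≤ v → v ≤ k →
      κ (p ^ (u * k + v)) = (p : ℝ) ^ (-(u : ℝ) - 1))
    (q d e₀ : ℕ) (hq : 0 < q) (hd : d ∣ q) (he : e₀ ∣ d)
    (D : ℕ → ℕ)
    (hfact : d / e₀ = ∏ i ∈ Finset.Icc 1 k, D i ^ i) :
    κ (q / d) ≤ (k : ℝ) ^ (4 * q.primeFactors.card) * κ q * (e₀ : ℝ) *
      ∏ i ∈ Finset.Icc 1 k, (D i : ℝ) := by
  have hκ : IsKappa k κ := ⟨hκ1, hκmul, hκA, hκB⟩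
  have hd_eq : d = e₀ * ∏ i ∈ Icc 1 k, D i ^ i := by rw [← hfact, Nat.mul_div_cancel' he]
  set m := e₀ * ∏ i ∈ Icc 1 k, D i
  have hmd : m ∣ d := hd_eq ▸ mul_dvd_mul_left e₀
    (prod_dvd_prod_of_dvd _ _ fun i hi => dvd_pow_self _ (by simp at hi; omega))
  have hdm : d ∣ m ^ k := by
    rw [hd_eq, mul_pow, ← prod_pow]
    exact mul_dvd_mul (dvd_pow_self _ (by omega))
      (prod_dvd_prod_of_dvd _ _ fun i hi => pow_dvd_pow _ (by simp at hi; omega))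
  calc κ (q / d) ≤ k ^ q.primeFactors.card * κ q * m :=
        hκ.apply_div_le hk hq.ne' hd (hmd.trans hd) hdm
    _ ≤ k ^ (4 * q.primeFactors.card) * κ q * m := by
        rw [mul_assoc, mul_assoc]
        gcongr
        · exact mul_nonneg (hκ.nonneg hk hq.ne') m.cast_nonneg
        · exact_mod_cast (by omega : 1 ≤ k)
        · omega
    _ = _ := by simp only [m, Nat.cast_mul, Nat.cast_prod]; ring
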